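/- arXiv:1502.06812 — 4 statements merged into one kernel-verified Lean document; each statement's English description precedes it below -/
import Mathlib

section
/- For every n ≥ 2, the harmonic function G_n(z) = -n/2 + Re(Σ_{j≥1} n z^j/(nj-1)) satisfies the Robin boundary condition n ∂_r G_n - G_n = 0 on the unit circle minus the point 1. -/
/-!
Write `F(z) = ∑_{j ≥ 1} n z^j / (n j - 1)`, so that `G_n(r e^{iθ}) = -n/2 + Re F(r c)` with
`c = e^{iθ}`. Termwise `(n z ∂_z - 1) F = ∑_{j ≥ 1} n z^j = n z / (1 - z)`, hence
`n ∂_r G_n - G_n = n/2 + n Re (c / (1 - r c)) + (1 - r)/r · Re F(r c)`.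
For `|c| = 1`, `c ≠ 1` one has `Re (c / (1 - c)) = -1/2`, which kills the first two terms in the
limit; and `n / (n j - 1) ≤ 2 / j` gives `|F(z)| ≤ -2 log (1 - |z|)`, so the last term is
`O((1 - r) log (1 - r)) → 0`.
-/

open Filter Topology Complex

noncomputable def robinSeries (n : ℕ) (z : ℂ) : ℂ :=
  ∑' j : ℕ, (n : ℂ) * z ^ (j + 1) / ((n : ℂ) * ((j : ℂ) + 1) - 1)

lemma norm_natCast_mul_div_sub_one_le {n : ℕ} (hn : 2 ≤ n) (j : ℕ) :
    ‖(n : ℂ) * ((j : ℂ) + 1) / ((n : ℂ) * ((j : ℂ) + 1) - 1)‖ ≤ 2 := by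
  have hx : (2 : ℝ) ≤ n * (j + 1) := by
    have : (2 : ℝ) ≤ n := by exact_mod_cast hn
    nlinarith [(j.cast_nonneg : (0 : ℝ) ≤ j)]
  have hcast : (n : ℂ) * ((j : ℂ) + 1) / ((n : ℂ) * ((j : ℂ) + 1) - 1)
      = ((n * (j + 1) / (n * (j + 1) - 1) : ℝ) : ℂ) := by push_cast; ring
  rw [hcast, norm_real, Real.norm_eq_abs, abs_of_nonneg (by apply div_nonneg <;> linarith),
    div_le_iff₀ (by linarith)]
  linarith

lemma natCast_mul_add_one_sub_one_ne_zero {n : ℕ} (hn : 2 ≤ n) (j : ℕ) :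
    (n : ℂ) * ((j : ℂ) + 1) - 1 ≠ 0 := by
  have : (2 : ℝ) ≤ n := by exact_mod_cast hn
  have hre : ((n : ℂ) * ((j : ℂ) + 1) - 1).re = n * (j + 1) - 1 := by simp
  intro h
  rw [h, zero_re] at hre
  nlinarith [(j.cast_nonneg : (0 : ℝ) ≤ j)]

lemma norm_robinTerm_le {n : ℕ} (hn : 2 ≤ n) (j : ℕ) (z : ℂ) :
    ‖(n : ℂ) * z ^ (j + 1) / ((n : ℂ) * ((j : ℂ) + 1) - 1)‖ ≤ 2 * (‖z‖ ^ (j + 1) / (j + 1)) := by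
  have hj : (j : ℂ) + 1 ≠ 0 := by exact_mod_cast j.succ_ne_zero
  have hterm : (n : ℂ) * z ^ (j + 1) / ((n : ℂ) * ((j : ℂ) + 1) - 1)
      = (n : ℂ) * ((j : ℂ) + 1) / ((n : ℂ) * ((j : ℂ) + 1) - 1) * (z ^ (j + 1) / ((j : ℂ) + 1)) := by
    field_simp
  have hpow : ‖z ^ (j + 1) / ((j : ℂ) + 1)‖ = ‖z‖ ^ (j + 1) / (j + 1) := by
    rw [norm_div, norm_pow, ← Nat.cast_succ, norm_natCast, Nat.cast_succ]
  rw [hterm, norm_mul, hpow]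
  gcongr
  exact norm_natCast_mul_div_sub_one_le hn j

lemma norm_robinDerivTerm_le {n : ℕ} (hn : 2 ≤ n) (j : ℕ) (z : ℂ) :
    ‖(n : ℂ) * ((j : ℂ) + 1) * z ^ j / ((n : ℂ) * ((j : ℂ) + 1) - 1)‖ ≤ 2 * ‖z‖ ^ j := by
  rw [mul_div_right_comm, norm_mul, norm_pow]
  gcongr
  exact norm_natCast_mul_div_sub_one_le hn j

lemma hasSum_robinSeries {n : ℕ} (hn : 2 ≤ n) {z : ℂ} (hz : ‖z‖ < 1) :
    HasSum (fun j : ℕ => (n : ℂ) * z ^ (j + 1) / ((n : ℂ) * ((j : ℂ) + 1) - 1)) (robinSeries n z) :=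
  (((Real.hasSum_pow_div_log_of_abs_lt_one (by rwa [abs_norm])).mul_left 2).summable.of_norm_bounded
    (norm_robinTerm_le hn · z)).hasSum

lemma norm_robinSeries_le {n : ℕ} (hn : 2 ≤ n) {z : ℂ} (hz : ‖z‖ < 1) :
    ‖robinSeries n z‖ ≤ 2 * -Real.log (1 - ‖z‖) :=
  tsum_of_norm_bounded ((Real.hasSum_pow_div_log_of_abs_lt_one (by rwa [abs_norm])).mul_left 2)
    (norm_robinTerm_le hn · z)

lemma hasDerivAt_robinSeries {n : ℕ} (hn : 2 ≤ n) {z : ℂ} (hz : ‖z‖ < 1) :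
    HasDerivAt (robinSeries n)
      (∑' j : ℕ, (n : ℂ) * ((j : ℂ) + 1) * z ^ j / ((n : ℂ) * ((j : ℂ) + 1) - 1)) z := by
  obtain ⟨ρ, hzρ, hρ1⟩ := exists_between hz
  refine hasDerivAt_tsum_of_isPreconnected
    (g := fun (j : ℕ) (y : ℂ) => (n : ℂ) * y ^ (j + 1) / ((n : ℂ) * ((j : ℂ) + 1) - 1))
    (g' := fun (j : ℕ) (y : ℂ) => (n : ℂ) * ((j : ℂ) + 1) * y ^ j / ((n : ℂ) * ((j : ℂ) + 1) - 1))
    ((summable_geometric_of_lt_one ((norm_nonneg z).trans hzρ.le) hρ1).mul_left 2)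
    Metric.isOpen_ball (convex_ball (0 : ℂ) ρ).isPreconnected (fun j y _ => ?_)
    (fun j y hy => ?_) (mem_ball_zero_iff.2 hzρ)
    (hasSum_robinSeries hn hz).summable (mem_ball_zero_iff.2 hzρ)
  · refine (((hasDerivAt_pow (j + 1) y).const_mul (n : ℂ)).div_const _).congr_deriv ?_
    push_cast
    ring
  · refine (norm_robinDerivTerm_le hn j y).trans ?_
    gcongr
    exact (mem_ball_zero_iff.1 hy).le

theorem robinSeries_euler {n : ℕ} (hn : 2 ≤ n) {z : ℂ} (hz : ‖z‖ < 1) :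
    n * z * deriv (robinSeries n) z = robinSeries n z + n * z / (1 - z) := by
  have hD : HasSum (fun j : ℕ => (n : ℂ) * ((j : ℂ) + 1) * z ^ j / ((n : ℂ) * ((j : ℂ) + 1) - 1))
      (deriv (robinSeries n) z) := by
    rw [(hasDerivAt_robinSeries hn hz).deriv]
    exact (((summable_geometric_of_lt_one (norm_nonneg z) hz).mul_left 2).of_norm_bounded
      (norm_robinDerivTerm_le hn · z)).hasSum
  have hgeom : HasSum (fun j : ℕ => n * z * z ^ j) (n * z / (1 - z)) := by
    simpa [div_eq_mul_inv] using (hasSum_geometric_of_norm_lt_one hz).mul_left (n * z)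
  have hdiff := ((hD.mul_left (n * z)).sub (hasSum_robinSeries hn hz)).unique
    (hgeom.congr_fun fun j => ?_)
  · exact eq_add_of_sub_eq' hdiff
  · have := natCast_mul_add_one_sub_one_ne_zero hn j
    field_simp
    ring

lemma hasDerivAt_re_robinSeries_ofReal_mul {n : ℕ} (hn : 2 ≤ n) {c : ℂ} {r : ℝ}
    (h : ‖(r : ℂ) * c‖ < 1) :
    HasDerivAt (fun s : ℝ => (robinSeries n (s * c)).re)
      (deriv (robinSeries n) (r * c) * c).re r := by
  have hF := (hasDerivAt_robinSeries hn h).differentiableAt.hasDerivAt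
  exact (hF.comp (r : ℂ) (hasDerivAt_mul_const c)).real_of_complex

lemma robinSeries_radial {n : ℕ} (hn : 2 ≤ n) {c : ℂ} {r : ℝ} (hr : r ≠ 0)
    (h : ‖(r : ℂ) * c‖ < 1) :
    n * (deriv (robinSeries n) (r * c) * c) = robinSeries n (r * c) / r + n * c / (1 - r * c) := by
  have hr' : (r : ℂ) ≠ 0 := ofReal_ne_zero.2 hr
  apply mul_left_cancel₀ hr'
  calc (r : ℂ) * (n * (deriv (robinSeries n) (r * c) * c))
      = n * (r * c) * deriv (robinSeries n) (r * c) := by ring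
    _ = robinSeries n (r * c) + n * (r * c) / (1 - r * c) := robinSeries_euler hn h
    _ = r * (robinSeries n (r * c) / r + n * c / (1 - r * c)) := by field_simp

lemma re_div_one_sub_of_norm_eq_one {c : ℂ} (hc : ‖c‖ = 1) (hc1 : c ≠ 1) :
    (c / (1 - c)).re = -1 / 2 := by
  have hsq : c.re * c.re + c.im * c.im = 1 := by
    rw [← normSq_apply, normSq_eq_norm_sq, hc, one_pow]
  have hre : c.re ≠ 1 := by
    intro h1
    exact hc1 (Complex.ext (by simpa using h1) (by simpa using (by nlinarith : c.im ^ 2 = 0)))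
  have hden : (1 - c.re) ^ 2 + c.im ^ 2 ≠ 0 := by
    intro h0
    exact hre (by nlinarith)
  rw [div_re, normSq_apply]
  simp only [sub_re, one_re, sub_im, one_im]
  field_simp
  nlinarith

lemma norm_ofReal_mul_of_norm_eq_one {c : ℂ} (hc : ‖c‖ = 1) {r : ℝ} (hr : 0 ≤ r) :
    ‖(r : ℂ) * c‖ = r := by
  rw [norm_mul, hc, mul_one, norm_real, Real.norm_of_nonneg hr]

lemma tendsto_re_div_one_sub_ofReal_mul {c : ℂ} (hc : ‖c‖ = 1) (hc1 : c ≠ 1) :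
    Tendsto (fun r : ℝ => (c / (1 - r * c)).re) (𝓝 1) (𝓝 (-1 / 2)) := by
  have h1c : 1 - ((1 : ℝ) : ℂ) * c ≠ 0 := by simpa using sub_ne_zero.2 hc1.symm
  have hcont : ContinuousAt (fun r : ℝ => (c / (1 - r * c)).re) 1 := by
    fun_prop (disch := exact h1c)
  simpa [re_div_one_sub_of_norm_eq_one hc hc1] using hcont.tendsto

lemma tendsto_one_sub_div_mul_re_robinSeries {n : ℕ} (hn : 2 ≤ n) {c : ℂ} (hc : ‖c‖ = 1) :
    Tendsto (fun r : ℝ => (1 - r) / r * (robinSeries n (r * c)).re) (𝓝[<] 1) (𝓝 0) := by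
  have hbound : ∀ᶠ r : ℝ in 𝓝[<] 1,
      ‖(1 - r) / r * (robinSeries n (r * c)).re‖ ≤ 2 / r * -((1 - r) * Real.log (1 - r)) := by
    filter_upwards [Ioo_mem_nhdsLT one_pos] with r ⟨hr0, hr1⟩
    have hrc := norm_ofReal_mul_of_norm_eq_one hc hr0.le
    calc ‖(1 - r) / r * (robinSeries n (r * c)).re‖
        ≤ (1 - r) / r * ‖robinSeries n (r * c)‖ := by
          rw [norm_mul, Real.norm_of_nonneg (div_nonneg (by linarith) hr0.le)]
          gcongr
          exact abs_re_le_norm _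
      _ ≤ (1 - r) / r * (2 * -Real.log (1 - r)) := by
          gcongr
          exact (norm_robinSeries_le hn (hrc.trans_lt hr1)).trans_eq (by rw [hrc])
      _ = 2 / r * -((1 - r) * Real.log (1 - r)) := by ring
  refine squeeze_zero_norm' hbound (tendsto_nhdsWithin_of_tendsto_nhds ?_)
  have hcont : ContinuousAt (fun r : ℝ => 2 / r * -((1 - r) * Real.log (1 - r))) 1 :=
    (continuousAt_const.div continuousAt_id one_ne_zero).mul
      ((Real.continuous_mul_log.comp (continuous_const.sub continuous_id)).continuousAt.neg)
  simpa using hcont.tendsto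

lemma exp_ofReal_mul_I_ne_one {θ : ℝ} (h0 : 0 < θ) (h2π : θ < 2 * Real.pi) :
    exp (θ * I) ≠ 1 := by
  rw [Ne, exp_eq_one_iff_of_im_nonneg (by simpa using h0.le)]
  rintro ⟨k, hk⟩
  have hθ : θ = k * (2 * Real.pi) := by simpa using congrArg im hk
  rcases Nat.eq_zero_or_pos k with rfl | hk1
  · simp at hθ; linarith
  · have : (1 : ℝ) ≤ k := by exact_mod_cast hk1
    nlinarith [Real.pi_pos]

/-- For n ≥ 2, G_n satisfies the Robin boundary condition n ∂_r G_n - G_n = 0 on the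
unit circle away from z = 1, understood as a radial limit from inside. -/
theorem stmt_5 (n : ℕ) (hn : 2 ≤ n) (θ : ℝ) (h1 : 0 < θ) (h2 : θ < 2 * Real.pi) :
    Tendsto
      (fun r : ℝ =>
        (n : ℝ) * deriv (fun r' : ℝ =>
            -(n : ℝ)/2 +
              (∑' j : ℕ, (n : ℂ) * ((r' : ℂ) * Complex.exp (θ * Complex.I))^(j+1)
                / ((n : ℂ)*((j : ℂ)+1) - 1)).re) r
          - (-(n : ℝ)/2 +
              (∑' j : ℕ, (n : ℂ) * ((r : ℂ) * Complex.exp (θ * Complex.I))^(j+1)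
                / ((n : ℂ)*((j : ℂ)+1) - 1)).re))
      (nhdsWithin 1 (Set.Iio 1)) (nhds 0) := by
  set c := exp (θ * I)
  have hc : ‖c‖ = 1 := norm_exp_ofReal_mul_I θ
  show Tendsto (fun r : ℝ => (n : ℝ) * deriv (fun s : ℝ => -(n : ℝ) / 2 +
      (robinSeries n (s * c)).re) r - (-(n : ℝ) / 2 + (robinSeries n (r * c)).re)) (𝓝[<] 1) (𝓝 0)
  have hlim : Tendsto (fun r : ℝ => n / 2 + n * (c / (1 - r * c)).re
      + (1 - r) / r * (robinSeries n (r * c)).re) (𝓝[<] 1) (𝓝 0) := by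
    have := (((tendsto_re_div_one_sub_ofReal_mul hc (exp_ofReal_mul_I_ne_one h1 h2)).mono_left
      nhdsWithin_le_nhds).const_mul (n : ℝ)).const_add ((n : ℝ) / 2) |>.add
      (tendsto_one_sub_div_mul_re_robinSeries hn hc)
    convert this using 2
    ring
  refine hlim.congr' ?_
  filter_upwards [Ioo_mem_nhdsLT one_pos] with r ⟨hr0, hr1⟩
  have hrc : ‖(r : ℂ) * c‖ < 1 := (norm_ofReal_mul_of_norm_eq_one hc hr0.le).trans_lt hr1
  rw [((hasDerivAt_re_robinSeries_ofReal_mul hn hrc).const_add _).deriv]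
  have hre := congrArg re (robinSeries_radial hn hr0.ne' hrc)
  rw [← ofReal_natCast, re_ofReal_mul, add_re, div_ofReal_re, mul_div_assoc, re_ofReal_mul] at hre
  rw [hre]
  field_simp
  ring
end

section
/- The pullback of the Euclidean metric on ℝ³ by the map X(ψ,φ,x₃) = (1/(cosh x₃ + cos ψ)) (sin ψ cos φ, sin ψ sin φ, sinh x₃) is (cosh x₃ + cos ψ)^{-2} (dψ² + sin²ψ dφ² + dx₃²). -/
/-! In cylindrical coordinates around the x₃-axis, `X = (sin ψ / D, sinh x₃ / D)` with
`D = cosh x₃ + cos ψ`. Its `ψ`- and `x₃`-derivatives have (radial, vertical) components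
`(N, S) / D²` and `(-S, N) / D²`, where `N = 1 + cosh x₃ cos ψ` and `S = sin ψ sinh x₃`, so they
are orthogonal, and they have length `1 / D` because `N² + S² = D²`. The `φ`-derivative is
horizontal and orthogonal to the meridian plane. -/

/-- The parametrization X(ψ,φ,x₃) of the unit ball. -/
noncomputable def Xmap (ψ φ x3 : ℝ) : ℝ × ℝ × ℝ :=
  (1 / (Real.cosh x3 + Real.cos ψ)) •
    ((Real.sin ψ * Real.cos φ, Real.sin ψ * Real.sin φ, Real.sinh x3) : ℝ × ℝ × ℝ)

/-- Euclidean dot product on ℝ³. -/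
def dot3 (p q : ℝ × ℝ × ℝ) : ℝ := p.1 * q.1 + p.2.1 * q.2.1 + p.2.2 * q.2.2

open Real

noncomputable def radialVec (φ a b : ℝ) : ℝ × ℝ × ℝ := (a * cos φ, a * sin φ, b)

noncomputable def angularVec (φ a : ℝ) : ℝ × ℝ × ℝ := (a * -sin φ, a * cos φ, 0)

lemma dot3_comm (p q : ℝ × ℝ × ℝ) : dot3 p q = dot3 q p := by
  simp only [dot3]; ring

lemma dot3_radialVec (φ a b c d : ℝ) :
    dot3 (radialVec φ a b) (radialVec φ c d) = a * c + b * d := by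
  simp only [dot3, radialVec]; linear_combination a * c * sin_sq_add_cos_sq φ

lemma dot3_angularVec_self (φ a : ℝ) : dot3 (angularVec φ a) (angularVec φ a) = a ^ 2 := by
  simp only [dot3, angularVec]; linear_combination a ^ 2 * sin_sq_add_cos_sq φ

lemma dot3_radialVec_angularVec (φ a b c : ℝ) :
    dot3 (radialVec φ a b) (angularVec φ c) = 0 := by
  simp only [dot3, radialVec, angularVec]; ring

lemma HasDerivAt.radialVec {a b : ℝ → ℝ} {a' b' t : ℝ} (φ : ℝ) (ha : HasDerivAt a a' t)
    (hb : HasDerivAt b b' t) :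
    HasDerivAt (fun s => radialVec φ (a s) (b s)) (radialVec φ a' b') t :=
  (ha.mul_const _).prodMk ((ha.mul_const _).prodMk hb)

lemma hasDerivAt_radialVec_angle (a b φ : ℝ) :
    HasDerivAt (fun s => radialVec s a b) (angularVec φ a) φ :=
  ((hasDerivAt_cos φ).const_mul a).prodMk
    (((hasDerivAt_sin φ).const_mul a).prodMk (hasDerivAt_const φ b))

lemma Xmap_eq_radialVec (ψ φ x3 : ℝ) :
    Xmap ψ φ x3 = radialVec φ (sin ψ / (cosh x3 + cos ψ)) (sinh x3 / (cosh x3 + cos ψ)) := by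
  simp only [Xmap, radialVec, Prod.smul_mk, smul_eq_mul]
  ext <;> ring

lemma hasDerivAt_Xmap_psi {ψ x3 : ℝ} (φ : ℝ) (hD : cosh x3 + cos ψ ≠ 0) :
    HasDerivAt (fun t => Xmap t φ x3)
      (radialVec φ ((1 + cosh x3 * cos ψ) / (cosh x3 + cos ψ) ^ 2)
        (sin ψ * sinh x3 / (cosh x3 + cos ψ) ^ 2)) ψ := by
  simp only [Xmap_eq_radialVec]
  have hD' : HasDerivAt (fun t => cosh x3 + cos t) (-sin ψ) ψ := (hasDerivAt_cos ψ).const_add _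
  refine (((hasDerivAt_sin ψ).fun_div hD' hD).radialVec φ
    ((hasDerivAt_const ψ (sinh x3)).fun_div hD' hD)).congr_deriv ?_
  congr 1
  · field_simp
    linear_combination sin_sq_add_cos_sq ψ
  · ring

lemma hasDerivAt_Xmap_phi (ψ φ x3 : ℝ) :
    HasDerivAt (fun t => Xmap ψ t x3) (angularVec φ (sin ψ / (cosh x3 + cos ψ))) φ := by
  simp only [Xmap_eq_radialVec]
  exact hasDerivAt_radialVec_angle _ _ φ

lemma hasDerivAt_Xmap_x3 {ψ x3 : ℝ} (φ : ℝ) (hD : cosh x3 + cos ψ ≠ 0) :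
    HasDerivAt (fun t => Xmap ψ φ t)
      (radialVec φ (-(sin ψ * sinh x3) / (cosh x3 + cos ψ) ^ 2)
        ((1 + cosh x3 * cos ψ) / (cosh x3 + cos ψ) ^ 2)) x3 := by
  simp only [Xmap_eq_radialVec]
  have hD' : HasDerivAt (fun t => cosh t + cos ψ) (sinh x3) x3 := (hasDerivAt_cosh x3).add_const _
  refine (((hasDerivAt_const x3 (sin ψ)).fun_div hD' hD).radialVec φ
    ((hasDerivAt_sinh x3).fun_div hD' hD)).congr_deriv ?_
  congr 1
  · ring
  · field_simp
    linear_combination cosh_sq_sub_sinh_sq x3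

lemma one_add_cosh_mul_cos_sq_add_sin_mul_sinh_sq (x y : ℝ) :
    (1 + cosh x * cos y) ^ 2 + (sin y * sinh x) ^ 2 = (cosh x + cos y) ^ 2 := by
  linear_combination sinh x ^ 2 * sin_sq_add_cos_sq y - (1 - cos y ^ 2) * cosh_sq_sub_sinh_sq x

lemma div_sq_sq_add_div_sq_sq {N S D : ℝ} (hD : D ≠ 0) (h : N ^ 2 + S ^ 2 = D ^ 2) :
    (N / D ^ 2) ^ 2 + (S / D ^ 2) ^ 2 = D⁻¹ ^ 2 := by
  field_simp
  linear_combination h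

/-- The pullback of the Euclidean metric by X is
(cosh x₃ + cos ψ)⁻²(dψ² + sin²ψ dφ² + dx₃²), expressed componentwise. -/
theorem stmt_8 (ψ φ x3 : ℝ) (hψ : ψ ∈ Set.Ioo 0 (Real.pi/2)) :
    dot3 (deriv (fun t => Xmap t φ x3) ψ) (deriv (fun t => Xmap t φ x3) ψ)
        = ((Real.cosh x3 + Real.cos ψ)⁻¹)^2
    ∧ dot3 (deriv (fun t => Xmap ψ t x3) φ) (deriv (fun t => Xmap ψ t x3) φ)
        = ((Real.cosh x3 + Real.cos ψ)⁻¹)^2 * (Real.sin ψ)^2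
    ∧ dot3 (deriv (fun t => Xmap ψ φ t) x3) (deriv (fun t => Xmap ψ φ t) x3)
        = ((Real.cosh x3 + Real.cos ψ)⁻¹)^2
    ∧ dot3 (deriv (fun t => Xmap t φ x3) ψ) (deriv (fun t => Xmap ψ t x3) φ) = 0
    ∧ dot3 (deriv (fun t => Xmap t φ x3) ψ) (deriv (fun t => Xmap ψ φ t) x3) = 0
    ∧ dot3 (deriv (fun t => Xmap ψ t x3) φ) (deriv (fun t => Xmap ψ φ t) x3) = 0 := by
  have hD : cosh x3 + cos ψ ≠ 0 :=
    (add_pos_of_pos_of_nonneg (cosh_pos x3)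
      (cos_nonneg_of_mem_Icc ⟨by linarith [hψ.1, pi_pos], hψ.2.le⟩)).ne'
  have key := one_add_cosh_mul_cos_sq_add_sin_mul_sinh_sq x3 ψ
  rw [(hasDerivAt_Xmap_psi φ hD).deriv, (hasDerivAt_Xmap_phi ψ φ x3).deriv,
    (hasDerivAt_Xmap_x3 φ hD).deriv, dot3_radialVec, dot3_radialVec, dot3_radialVec,
    dot3_angularVec_self, dot3_radialVec_angularVec, dot3_comm, dot3_radialVec_angularVec]
  refine ⟨?_, by ring, ?_, rfl, by ring, rfl⟩ <;>
    rw [← div_sq_sq_add_div_sq_sq hD key] <;> ring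
end

section
/- The linearization at u = 0 of the mean curvature operator H(u) = (1/(A³(u)B)) div(A²(u)B²∇u/√(1+B²|∇u|²)) + 2√(1+B²|∇u|²) sinh u is v ↦ Δ(B v) = Δ((1+|z|²)v/2), where Δ is the flat Laplacian on D². -/
/-- Flat gradient on ℝ². -/
noncomputable def grad2 (f : ℝ × ℝ → ℝ) (p : ℝ × ℝ) : ℝ × ℝ :=
  (fderiv ℝ f p (1, 0), fderiv ℝ f p (0, 1))

/-- Flat divergence on ℝ². -/
noncomputable def div2 (V : ℝ × ℝ → ℝ × ℝ) (p : ℝ × ℝ) : ℝ :=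
  fderiv ℝ (fun q => (V q).1) p (1, 0) + fderiv ℝ (fun q => (V q).2) p (0, 1)

/-- Flat Laplacian on ℝ². -/
noncomputable def lap2 (f : ℝ × ℝ → ℝ) (p : ℝ × ℝ) : ℝ := div2 (grad2 f) p

/-- Euclidean squared norm on ℝ². -/
def nsq2 (v : ℝ × ℝ) : ℝ := v.1^2 + v.2^2

noncomputable def Bf (p : ℝ × ℝ) : ℝ := (1 + p.1^2 + p.2^2)/2

noncomputable def Af (p : ℝ × ℝ) (x3 : ℝ) : ℝ := 1 / (1 + Bf p * (Real.cosh x3 - 1))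

/-- The mean curvature operator for graphs in the unit ball:
H(u) = (1/(A³(u)B)) div(A²(u)B²∇u/√(1+B²|∇u|²)) + 2√(1+B²|∇u|²) sinh u. -/
noncomputable def Hop (u : ℝ × ℝ → ℝ) (p : ℝ × ℝ) : ℝ :=
  (1 / ((Af p (u p))^3 * Bf p)) *
    div2 (fun q =>
      (((Af q (u q))^2 * (Bf q)^2 / Real.sqrt (1 + (Bf q)^2 * nsq2 (grad2 u q))) : ℝ)
        • grad2 u q) p
  + 2 * Real.sqrt (1 + (Bf p)^2 * nsq2 (grad2 u p)) * Real.sinh (u p)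

open Real

lemma Bf_pos (q : ℝ × ℝ) : 0 < Bf q := by
  unfold Bf; positivity

lemma Bf_contDiff : ContDiff ℝ (⊤ : ℕ∞) Bf := by
  unfold Bf
  exact ((contDiff_const.add ((contDiff_fst.pow 2))).add (contDiff_snd.pow 2)).div_const 2

lemma Af_den_pos (q : ℝ × ℝ) (s : ℝ) : 0 < 1 + Bf q * (Real.cosh s - 1) := by
  have h1 : (1:ℝ) ≤ Real.cosh s := Real.one_le_cosh s
  have := Bf_pos q
  nlinarith

lemma g_contDiff {v : ℝ × ℝ → ℝ} (hv : ContDiff ℝ (⊤ : ℕ∞) v) (w : ℝ × ℝ) :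
    ContDiff ℝ (⊤ : ℕ∞) (fun q => fderiv ℝ v q w) :=
  (hv.fderiv_right (by simp)).clm_apply contDiff_const

lemma grad2_contDiff {v : ℝ × ℝ → ℝ} (hv : ContDiff ℝ (⊤ : ℕ∞) v) :
    ContDiff ℝ (⊤ : ℕ∞) (grad2 v) :=
  (g_contDiff hv (1,0)).prodMk (g_contDiff hv (0,1))

noncomputable def scJ (v : ℝ × ℝ → ℝ) (x : ℝ × (ℝ × ℝ)) : ℝ :=
  (Af x.2 (x.1 * v x.2))^2 * (Bf x.2)^2 /
    Real.sqrt (1 + (Bf x.2)^2 * nsq2 (x.1 • grad2 v x.2))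

lemma nsq2_smul (t : ℝ) (w : ℝ × ℝ) : nsq2 (t • w) = t^2 * nsq2 w := by
  simp [nsq2, Prod.smul_fst, Prod.smul_snd, smul_eq_mul]; ring

lemma nsq2_nonneg (w : ℝ × ℝ) : 0 ≤ nsq2 w := by unfold nsq2; positivity

lemma sqrt_arg_pos (q : ℝ × ℝ) (w : ℝ × ℝ) : 0 < 1 + (Bf q)^2 * nsq2 w := by
  have := nsq2_nonneg w
  have := Bf_pos q
  nlinarith

lemma Af_contDiff {v : ℝ × ℝ → ℝ} (hv : ContDiff ℝ (⊤ : ℕ∞) v) :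
    ContDiff ℝ (⊤ : ℕ∞) (fun x : ℝ × (ℝ × ℝ) => Af x.2 (x.1 * v x.2)) := by
  unfold Af
  apply contDiff_const.div
  · exact contDiff_const.add ((Bf_contDiff.comp contDiff_snd).mul
      ((ContDiff.cosh (contDiff_fst.mul (hv.comp contDiff_snd))).sub contDiff_const))
  · intro x; exact (Af_den_pos x.2 _).ne'

lemma scJ_contDiff {v : ℝ × ℝ → ℝ} (hv : ContDiff ℝ (⊤ : ℕ∞) v) :
    ContDiff ℝ (⊤ : ℕ∞) (scJ v) := by
  unfold scJ
  apply ContDiff.div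
  · exact ((Af_contDiff hv).pow 2).mul ((Bf_contDiff.comp contDiff_snd).pow 2)
  · apply ContDiff.sqrt
    · have hn : ContDiff ℝ (⊤ : ℕ∞) (fun x : ℝ × (ℝ × ℝ) => nsq2 (x.1 • grad2 v x.2)) := by
        have : (fun x : ℝ × (ℝ × ℝ) => nsq2 (x.1 • grad2 v x.2))
            = fun x => x.1 ^ 2 * nsq2 (grad2 v x.2) := by
          funext x; exact nsq2_smul _ _
        rw [this]
        exact (contDiff_fst.pow 2).mul
          ((contDiff_fst.pow 2 |>.add (contDiff_snd.pow 2)).comp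
            ((grad2_contDiff hv).comp contDiff_snd))
      exact contDiff_const.add (((Bf_contDiff.comp contDiff_snd).pow 2).mul hn)
    · intro x; exact (sqrt_arg_pos x.2 _).ne'
  · intro x; exact (Real.sqrt_pos.mpr (sqrt_arg_pos x.2 _)).ne'

lemma slice_fderiv {F : ℝ × (ℝ × ℝ) → ℝ} (hF : ContDiff ℝ (⊤ : ℕ∞) F) (t : ℝ) (p w : ℝ × ℝ) :
    fderiv ℝ (fun q => F (t, q)) p w = fderiv ℝ F (t, p) (0, w) := by
  have inner : HasFDerivAt (fun q : ℝ × ℝ => ((t, q) : ℝ × (ℝ × ℝ)))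
      ((0 : (ℝ × ℝ) →L[ℝ] ℝ).prod (ContinuousLinearMap.id ℝ (ℝ × ℝ))) p :=
    (hasFDerivAt_const t p).prodMk (hasFDerivAt_id p)
  have hFd : HasFDerivAt F (fderiv ℝ F (t, p)) (t, p) :=
    (hF.differentiable (by simp) (t, p)).hasFDerivAt
  have := (hFd.comp p inner).fderiv
  rw [show (fun q => F (t, q)) = F ∘ (fun q : ℝ × ℝ => ((t, q) : ℝ × (ℝ × ℝ))) from rfl, this]
  rfl

lemma slice_diff {F : ℝ × (ℝ × ℝ) → ℝ} (hF : ContDiff ℝ (⊤ : ℕ∞) F) (t : ℝ) (p : ℝ × ℝ) :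
    DifferentiableAt ℝ (fun q => F (t, q)) p := by
  have inner : HasFDerivAt (fun q : ℝ × ℝ => ((t, q) : ℝ × (ℝ × ℝ)))
      ((0 : (ℝ × ℝ) →L[ℝ] ℝ).prod (ContinuousLinearMap.id ℝ (ℝ × ℝ))) p :=
    (hasFDerivAt_const t p).prodMk (hasFDerivAt_id p)
  exact (((hF.differentiable (by simp) (t, p)).hasFDerivAt).comp p inner).differentiableAt

lemma slice_fderiv_cont {F : ℝ × (ℝ × ℝ) → ℝ} (hF : ContDiff ℝ (⊤ : ℕ∞) F) (p w : ℝ × ℝ) :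
    Continuous (fun t => fderiv ℝ F (t, p) (0, w)) :=
  ((hF.continuous_fderiv (by simp)).comp (continuous_id.prodMk continuous_const)).clm_apply
    continuous_const

lemma fd_mul {f g : ℝ × ℝ → ℝ} {p : ℝ × ℝ} (hf : DifferentiableAt ℝ f p)
    (hg : DifferentiableAt ℝ g p) (w : ℝ × ℝ) :
    fderiv ℝ (fun q => f q * g q) p w = f p * fderiv ℝ g p w + g p * fderiv ℝ f p w := by
  rw [fderiv_fun_mul hf hg]; simp

lemma fd_add {f g : ℝ × ℝ → ℝ} {p : ℝ × ℝ} (hf : DifferentiableAt ℝ f p)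
    (hg : DifferentiableAt ℝ g p) (w : ℝ × ℝ) :
    fderiv ℝ (fun q => f q + g q) p w = fderiv ℝ f p w + fderiv ℝ g p w := by
  rw [fderiv_fun_add hf hg]; simp

lemma hasFDerivAt_Bf (q : ℝ × ℝ) :
    HasFDerivAt Bf ((q.1 • ContinuousLinearMap.fst ℝ ℝ ℝ) +
      (q.2 • ContinuousLinearMap.snd ℝ ℝ ℝ)) q := by
  have hB : Bf = fun q : ℝ × ℝ => (1 + q.1 * q.1 + q.2 * q.2) * (2:ℝ)⁻¹ := by
    funext q; unfold Bf; ring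
  rw [hB]
  have h := (((((hasFDerivAt_fst (𝕜 := ℝ) (p := q)).mul (hasFDerivAt_fst)).const_add 1).add
      ((hasFDerivAt_snd (𝕜 := ℝ) (p := q)).mul (hasFDerivAt_snd))).mul_const ((2:ℝ)⁻¹))
  refine h.congr_fderiv ?_
  refine ContinuousLinearMap.ext fun w => ?_
  simp
  ring

lemma fderiv_Bf (q w : ℝ × ℝ) : fderiv ℝ Bf q w = q.1 * w.1 + q.2 * w.2 := by
  rw [(hasFDerivAt_Bf q).fderiv]; simp [mul_comm]

lemma diff_Bf (q : ℝ × ℝ) : DifferentiableAt ℝ Bf q := (hasFDerivAt_Bf q).differentiableAt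

lemma fderiv_fstf (q w : ℝ × ℝ) : fderiv ℝ (fun q : ℝ × ℝ => q.1) q w = w.1 := by
  rw [fderiv_fst]; rfl

lemma fderiv_sndf (q w : ℝ × ℝ) : fderiv ℝ (fun q : ℝ × ℝ => q.2) q w = w.2 := by
  rw [fderiv_snd]; rfl

noncomputable def F1 (v : ℝ × ℝ → ℝ) (x : ℝ × (ℝ × ℝ)) : ℝ := scJ v x * (grad2 v x.2).1
noncomputable def F2 (v : ℝ × ℝ → ℝ) (x : ℝ × (ℝ × ℝ)) : ℝ := scJ v x * (grad2 v x.2).2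

lemma F1_contDiff {v : ℝ × ℝ → ℝ} (hv : ContDiff ℝ (⊤ : ℕ∞) v) : ContDiff ℝ (⊤ : ℕ∞) (F1 v) :=
  (scJ_contDiff hv).mul ((g_contDiff hv (1,0)).comp contDiff_snd)

lemma F2_contDiff {v : ℝ × ℝ → ℝ} (hv : ContDiff ℝ (⊤ : ℕ∞) v) : ContDiff ℝ (⊤ : ℕ∞) (F2 v) :=
  (scJ_contDiff hv).mul ((g_contDiff hv (0,1)).comp contDiff_snd)

lemma grad2_const_mul {v : ℝ × ℝ → ℝ} (hv : Differentiable ℝ v) (t : ℝ) (q : ℝ × ℝ) :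
    grad2 (fun q => t * v q) q = t • grad2 v q := by
  unfold grad2
  rw [fderiv_const_mul (hv q)]
  simp [Prod.smul_mk]

lemma Hop_eq {v : ℝ × ℝ → ℝ} (hv : ContDiff ℝ (⊤ : ℕ∞) v) (p : ℝ × ℝ) (t : ℝ) :
    Hop (fun q => t * v q) p =
      (1/((Af p (t * v p))^3 * Bf p)) *
        (t * (fderiv ℝ (fun q => F1 v (t, q)) p (1,0)
            + fderiv ℝ (fun q => F2 v (t, q)) p (0,1)))
      + 2 * Real.sqrt (1 + (Bf p)^2 * (t^2 * nsq2 (grad2 v p))) * Real.sinh (t * v p) := by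
  have hdv : Differentiable ℝ v := hv.differentiable (by simp)
  have hg : ∀ q, grad2 (fun q => t * v q) q = t • grad2 v q := grad2_const_mul hdv t
  unfold Hop
  have hfield : (fun q =>
      (((Af q ((fun q => t * v q) q))^2 * (Bf q)^2 /
        Real.sqrt (1 + (Bf q)^2 * nsq2 (grad2 (fun q => t * v q) q))) : ℝ)
        • grad2 (fun q => t * v q) q)
      = fun q => t • (scJ v (t, q) • grad2 v q) := by
    funext q
    rw [hg q]
    unfold scJ
    rw [smul_comm]
  rw [hfield, hg p, nsq2_smul]
  congr 1
  · congr 1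
    unfold div2
    have h1 : (fun q => (t • (scJ v (t, q) • grad2 v q)).1)
        = fun q => t * F1 v (t, q) := by
      funext q; unfold F1
      simp [Prod.smul_fst, smul_eq_mul, mul_assoc]
    have h2 : (fun q => (t • (scJ v (t, q) • grad2 v q)).2)
        = fun q => t * F2 v (t, q) := by
      funext q; unfold F2
      simp [Prod.smul_snd, smul_eq_mul, mul_assoc]
    rw [h1, h2, fderiv_const_mul (slice_diff (F1_contDiff hv) t p),
      fderiv_const_mul (slice_diff (F2_contDiff hv) t p)]
    simp [mul_add]

lemma scJ_zero (v : ℝ × ℝ → ℝ) (q : ℝ × ℝ) : scJ v (0, q) = Bf q * Bf q := by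
  unfold scJ Af
  have h : nsq2 ((0:ℝ) • grad2 v q) = 0 := by rw [nsq2_smul]; ring
  rw [h]
  simp [Real.cosh_zero]
  ring

lemma Af_pos (q : ℝ × ℝ) (s : ℝ) : 0 < Af q s := by
  unfold Af
  exact div_pos one_pos (Af_den_pos q s)

lemma e_zero {v : ℝ × ℝ → ℝ} (hv : ContDiff ℝ (⊤ : ℕ∞) v) (p : ℝ × ℝ) :
    fderiv ℝ (fun q => F1 v (0, q)) p (1,0) + fderiv ℝ (fun q => F2 v (0, q)) p (0,1)
    = (Bf p * Bf p) * fderiv ℝ (fun q => fderiv ℝ v q (1,0)) p (1,0)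
      + fderiv ℝ v p (1,0) * (2 * Bf p * p.1)
      + ((Bf p * Bf p) * fderiv ℝ (fun q => fderiv ℝ v q (0,1)) p (0,1)
      + fderiv ℝ v p (0,1) * (2 * Bf p * p.2)) := by
  have hBB : DifferentiableAt ℝ (fun q => Bf q * Bf q) p := (diff_Bf p).mul (diff_Bf p)
  have hg1 : DifferentiableAt ℝ (fun q => fderiv ℝ v q (1,0)) p :=
    (g_contDiff hv (1,0)).differentiable (by simp) p
  have hg2 : DifferentiableAt ℝ (fun q => fderiv ℝ v q (0,1)) p :=
    (g_contDiff hv (0,1)).differentiable (by simp) p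
  have h1 : (fun q => F1 v (0, q)) = fun q => (Bf q * Bf q) * fderiv ℝ v q (1,0) := by
    funext q; unfold F1; rw [scJ_zero]; rfl
  have h2 : (fun q => F2 v (0, q)) = fun q => (Bf q * Bf q) * fderiv ℝ v q (0,1) := by
    funext q; unfold F2; rw [scJ_zero]; rfl
  have hBBd : ∀ w : ℝ × ℝ, fderiv ℝ (fun q => Bf q * Bf q) p w
      = Bf p * (p.1 * w.1 + p.2 * w.2) + Bf p * (p.1 * w.1 + p.2 * w.2) := by
    intro w; rw [fd_mul (diff_Bf p) (diff_Bf p), fderiv_Bf]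
  rw [h1, h2, fd_mul hBB hg1, fd_mul hBB hg2, hBBd, hBBd]
  ring

lemma lap2_Bv {v : ℝ × ℝ → ℝ} (hv : ContDiff ℝ (⊤ : ℕ∞) v) (p : ℝ × ℝ) :
    lap2 (fun q => Bf q * v q) p
    = Bf p * fderiv ℝ (fun q => fderiv ℝ v q (1,0)) p (1,0)
      + 2 * p.1 * fderiv ℝ v p (1,0) + v p
      + (Bf p * fderiv ℝ (fun q => fderiv ℝ v q (0,1)) p (0,1)
      + 2 * p.2 * fderiv ℝ v p (0,1) + v p) := by
  have hdv : Differentiable ℝ v := hv.differentiable (by simp)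
  have hg1 : DifferentiableAt ℝ (fun q => fderiv ℝ v q (1,0)) p :=
    (g_contDiff hv (1,0)).differentiable (by simp) p
  have hg2 : DifferentiableAt ℝ (fun q => fderiv ℝ v q (0,1)) p :=
    (g_contDiff hv (0,1)).differentiable (by simp) p
  have hgBv : grad2 (fun q => Bf q * v q)
      = fun q => (Bf q * fderiv ℝ v q (1,0) + v q * q.1,
                  Bf q * fderiv ℝ v q (0,1) + v q * q.2) := by
    funext q
    unfold grad2
    rw [fd_mul (diff_Bf q) (hdv q), fd_mul (diff_Bf q) (hdv q), fderiv_Bf, fderiv_Bf]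
    norm_num
  unfold lap2 div2
  rw [hgBv]
  have c1 : (fun q => ((fun q => (Bf q * fderiv ℝ v q (1,0) + v q * q.1,
      Bf q * fderiv ℝ v q (0,1) + v q * q.2)) q).1)
      = fun q => Bf q * fderiv ℝ v q (1,0) + v q * q.1 := rfl
  have c2 : (fun q => ((fun q => (Bf q * fderiv ℝ v q (1,0) + v q * q.1,
      Bf q * fderiv ℝ v q (0,1) + v q * q.2)) q).2)
      = fun q => Bf q * fderiv ℝ v q (0,1) + v q * q.2 := rfl
  rw [c1, c2,
    fd_add ((diff_Bf p).fun_mul hg1) ((hdv p).fun_mul differentiableAt_fst),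
    fd_add ((diff_Bf p).fun_mul hg2) ((hdv p).fun_mul differentiableAt_snd),
    fd_mul (diff_Bf p) hg1, fd_mul (diff_Bf p) hg2,
    fd_mul (hdv p) differentiableAt_fst, fd_mul (hdv p) differentiableAt_snd,
    fderiv_Bf, fderiv_Bf, fderiv_fstf, fderiv_sndf]
  ring

/-- The linearization of the mean curvature operator at u = 0 is v ↦ Δ(Bv). -/
theorem stmt_10 (v : ℝ × ℝ → ℝ) (hv : ContDiff ℝ (⊤ : ℕ∞) v) (p : ℝ × ℝ)
    (hp : p.1^2 + p.2^2 < 1) :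
    HasDerivAt (fun t : ℝ => Hop (fun q => t * v q) p)
      (lap2 (fun q => Bf q * v q) p) 0 := by
  set n := nsq2 (grad2 v p) with hn
  set e : ℝ → ℝ := fun t =>
    fderiv ℝ (F1 v) (t, p) (0, (1,0)) + fderiv ℝ (F2 v) (t, p) (0, (0,1)) with he
  have key : (fun t : ℝ => Hop (fun q => t * v q) p) = fun t =>
      (1/((Af p (t * v p))^3 * Bf p)) * (t * e t)
      + 2 * Real.sqrt (1 + (Bf p)^2 * (t^2 * n)) * Real.sinh (t * v p) := by
    funext t
    rw [Hop_eq hv p t, slice_fderiv (F1_contDiff hv), slice_fderiv (F2_contDiff hv)]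
  have he_cont : Continuous e :=
    (slice_fderiv_cont (F1_contDiff hv) p (1,0)).add
      (slice_fderiv_cont (F2_contDiff hv) p (0,1))
  have hTE : HasDerivAt (fun t => t * e t) (e 0) 0 := by
    rw [hasDerivAt_iff_tendsto_slope]
    have hev : e =ᶠ[nhdsWithin (0:ℝ) {(0:ℝ)}ᶜ] slope (fun t => t * e t) 0 := by
      filter_upwards [self_mem_nhdsWithin] with t ht
      have ht' : t ≠ 0 := ht
      rw [slope_def_field]
      field_simp
      ring
    exact ((he_cont.tendsto 0).mono_left nhdsWithin_le_nhds).congr' hev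
  have hA : Differentiable ℝ (fun t : ℝ => Af p (t * v p)) := by
    unfold Af
    apply Differentiable.div (differentiable_const _)
    · exact (differentiable_const _).add ((differentiable_const _).mul
        ((Real.differentiable_cosh.comp (differentiable_id.mul_const _)).sub
          (differentiable_const _)))
    · intro t; exact (Af_den_pos p _).ne'
  have hc : DifferentiableAt ℝ (fun t : ℝ => 1/((Af p (t * v p))^3 * Bf p)) 0 := by
    apply DifferentiableAt.div (differentiableAt_const _)
    · exact (((hA.pow 3).mul_const _) 0)
    · exact (mul_pos (pow_pos (Af_pos p _) 3) (Bf_pos p)).ne'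
  have hprod := (hc.hasDerivAt).mul hTE
  -- the sinh / sqrt part
  have hm : HasDerivAt (fun t : ℝ => 1 + (Bf p)^2 * (t^2 * n)) 0 0 := by
    have h := (((hasDerivAt_pow 2 (0:ℝ)).mul_const n).const_mul ((Bf p)^2)).const_add 1
    simpa using h
  have hs : HasDerivAt (fun t : ℝ =>
      2 * Real.sqrt (1 + (Bf p)^2 * (t^2 * n)) * Real.sinh (t * v p)) (2 * v p) 0 := by
    have hsinh : HasDerivAt (fun t : ℝ => Real.sinh (t * v p))
        (Real.cosh ((0:ℝ) * v p) * (1 * v p)) 0 :=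
      ((hasDerivAt_id (0:ℝ)).mul_const (v p)).sinh
    have hne : (1:ℝ) + (Bf p)^2 * ((0:ℝ)^2 * n) ≠ 0 := by norm_num
    have h := ((hm.sqrt hne).const_mul (2:ℝ)).mul hsinh
    norm_num [Real.sqrt_one] at h
    exact h
  have total := hprod.add hs
  rw [key]
  have hE0 : e 0
      = (Bf p * Bf p) * fderiv ℝ (fun q => fderiv ℝ v q (1,0)) p (1,0)
        + fderiv ℝ v p (1,0) * (2 * Bf p * p.1)
        + ((Bf p * Bf p) * fderiv ℝ (fun q => fderiv ℝ v q (0,1)) p (0,1)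
        + fderiv ℝ v p (0,1) * (2 * Bf p * p.2)) := by
    rw [he]
    show (fderiv ℝ (F1 v) ((0:ℝ), p)) (0, (1,0)) + (fderiv ℝ (F2 v) ((0:ℝ), p)) (0, (0,1)) = _
    rw [← slice_fderiv (F1_contDiff hv), ← slice_fderiv (F2_contDiff hv), e_zero hv p]
  have hA0 : Af p ((0:ℝ) * v p) = 1 := by
    unfold Af; simp
  have hval : lap2 (fun q => Bf q * v q) p
      = deriv (fun t => 1 / (Af p (t * v p) ^ 3 * Bf p)) 0 * (0 * e 0)
        + 1 / (Af p ((0:ℝ) * v p) ^ 3 * Bf p) * e 0 + 2 * v p := by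
    rw [hA0, hE0, lap2_Bv hv p]
    have hBne : Bf p ≠ 0 := (Bf_pos p).ne'
    field_simp
    ring
  rw [hval]
  exact total
end

section
/- For each n-th root of unity z_m, the function h_n(z) := n z^{n-2}/(z^n − 1) − 1/(z_m(z − z_m)) extends continuously to z = z_m and satisfies |h_n(z_m)| ≤ c·n for a constant c independent of n. -/
open Filter Topology Finset

/-!
Write `z ^ n - 1 = (z - ζ) * S z` with `S z = ∑ i < n, z ^ i * ζ ^ (n - 1 - i)`. Then the function
equals `F z / ((z - ζ) * (ζ * S z))` with `F z = n * z ^ (n - 2) * ζ - S z`, and `F ζ = 0` because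
`ζ * S ζ = n`. So it is a difference quotient of `F` at `ζ` divided by `ζ * S z → n`, and tends to
`F' ζ / n = ζ ^ (n - 2) * (n - 3) / 2`, whose modulus `|n - 3| / 2` is at most `n`.
-/

section

variable {𝕜 : Type*} [NontriviallyNormedField 𝕜]

theorem tendsto_div_sub_mul_nhdsNE {F G : 𝕜 → 𝕜} {a D : 𝕜} (hF : HasDerivAt F D a)
    (hFa : F a = 0) (hG : ContinuousAt G a) (hGa : G a ≠ 0) :
    Tendsto (fun z => F z / ((z - a) * G z)) (𝓝[≠] a) (𝓝 (D / G a)) := by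
  have hslope := (hasDerivAt_iff_tendsto_slope.mp hF).div (hG.mono_left nhdsWithin_le_nhds) hGa
  refine hslope.congr fun z => ?_
  rw [Pi.div_apply, slope_def_field, hFa, sub_zero, div_div]

theorem natCast_mul_pow_pred_mul_pow_sub (y : 𝕜) {i j : ℕ} (hij : i ≤ j) :
    (i : 𝕜) * y ^ (i - 1) * y ^ (j - i) = i * y ^ (j - 1) := by
  rcases i with _ | i
  · simp
  · rw [mul_assoc, ← pow_add]
    congr 2
    omega

theorem hasDerivAt_geom_sum₂_self (y : 𝕜) (n : ℕ) :
    HasDerivAt (fun z => ∑ i ∈ range n, z ^ i * y ^ (n - 1 - i)) (n.choose 2 * y ^ (n - 2)) y := by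
  have hterm : ∀ i ∈ range n,
      HasDerivAt (fun z => z ^ i * y ^ (n - 1 - i)) (i * y ^ (i - 1) * y ^ (n - 1 - i)) y :=
    fun i _ => (hasDerivAt_pow i y).mul_const _
  refine (HasDerivAt.fun_sum hterm).congr_deriv ?_
  rw [sum_congr rfl fun i hi => natCast_mul_pow_pred_mul_pow_sub y
    (Nat.le_sub_one_of_lt (mem_range.mp hi)), ← sum_mul, ← Nat.cast_sum, sum_range_id,
    ← Nat.choose_two_right, Nat.sub_sub]

theorem tendsto_natCast_mul_pow_div_pow_sub_one_sub [CharZero 𝕜] {n : ℕ} (hn : 2 ≤ n) {ζ : 𝕜}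
    (hζ : ζ ^ n = 1) :
    Tendsto (fun z => n * z ^ (n - 2) / (z ^ n - 1) - 1 / (ζ * (z - ζ))) (𝓝[≠] ζ)
      (𝓝 (ζ ^ (n - 2) * ((n - 3) / 2))) := by
  set S : 𝕜 → 𝕜 := fun z => ∑ i ∈ range n, z ^ i * ζ ^ (n - 1 - i)
  have hfactor : ∀ z, z ^ n - 1 = (z - ζ) * S z := fun z => by
    rw [← hζ, mul_comm]; exact (geom_sum₂_mul z ζ n).symm
  have hSζ : ζ * S ζ = n := by
    simp only [S, geom_sum₂_self]
    rw [mul_left_comm, ← pow_succ', Nat.sub_add_cancel (by omega), hζ, mul_one]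
  have hS : Continuous S := by fun_prop
  set F : 𝕜 → 𝕜 := fun z => n * z ^ (n - 2) * ζ - S z
  have hFζ : F ζ = 0 := by
    simp only [F, S, geom_sum₂_self, mul_assoc, ← pow_succ]
    rw [show n - 2 + 1 = n - 1 by omega, sub_self]
  have hF : HasDerivAt F (n * (n - 2 : ℕ) * ζ ^ (n - 2) - n.choose 2 * ζ ^ (n - 2)) ζ := by
    refine ((((hasDerivAt_pow (n - 2) ζ).const_mul (n : 𝕜)).mul_const ζ).sub
      (hasDerivAt_geom_sum₂_self ζ n)).congr_deriv ?_
    have hpow := natCast_mul_pow_pred_mul_pow_sub ζ (Nat.le_succ (n - 2))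
    rw [Nat.succ_sub_one, Nat.succ_sub (le_refl _), Nat.sub_self, pow_one] at hpow
    rw [mul_assoc, hpow, ← mul_assoc]
  have hn0 : (n : 𝕜) ≠ 0 := by exact_mod_cast (show n ≠ 0 by omega)
  have hGζ : ζ * S ζ ≠ 0 := hSζ ▸ hn0
  have hζ0 : ζ ≠ 0 := left_ne_zero_of_mul hGζ
  have hlim := tendsto_div_sub_mul_nhdsNE (G := fun z => ζ * S z) hF hFζ
    (continuous_const.mul hS).continuousAt hGζ
  have hSne : ∀ᶠ z in 𝓝[≠] ζ, S z ≠ 0 :=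
    (hS.continuousAt.eventually_ne (right_ne_zero_of_mul hGζ)).filter_mono
      nhdsWithin_le_nhds
  convert hlim.congr' ?_ using 2
  · rw [hSζ, Nat.cast_sub hn, Nat.cast_choose_two]
    field_simp
    ring
  · filter_upwards [hSne, self_mem_nhdsWithin] with z hSz hzζ
    rw [hfactor z]
    field_simp
    ring

end

/-- For each n-th root of unity z_m, h_n(z) = n z^{n-2}/(z^n − 1) − 1/(z_m(z − z_m))
extends continuously to z_m with |h_n(z_m)| ≤ c·n, c independent of n. -/
theorem stmt_12 : ∃ c : ℝ, 0 < c ∧ ∀ n : ℕ, 2 ≤ n → ∀ m : ℕ,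
    ∃ L : ℂ,
      Tendsto
        (fun z : ℂ => (n : ℂ) * z^(n-2) / (z^n - 1)
          - 1 / (Complex.exp (2*Real.pi*Complex.I*m/n)
              * (z - Complex.exp (2*Real.pi*Complex.I*m/n))))
        (nhdsWithin (Complex.exp (2*Real.pi*Complex.I*m/n)) {z : ℂ | z^n ≠ 1})
        (nhds L)
      ∧ ‖L‖ ≤ c * n := by
  refine ⟨1, one_pos, fun n hn m => ?_⟩
  set ζ := Complex.exp (2 * Real.pi * Complex.I * m / n)
  have hζ : ζ ^ n = 1 := by
    have hn0 : (n : ℂ) ≠ 0 := by exact_mod_cast (show n ≠ 0 by omega)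
    rw [← Complex.exp_nat_mul, show (n : ℂ) * (2 * Real.pi * Complex.I * m / n)
      = (m : ℤ) * (2 * Real.pi * Complex.I) by push_cast; field_simp]
    exact Complex.exp_int_mul_two_pi_mul_I m
  have hroots : {z : ℂ | z ^ n ≠ 1} ⊆ {ζ}ᶜ := fun z hz hzζ => hz (hzζ ▸ hζ)
  refine ⟨_, (tendsto_natCast_mul_pow_div_pow_sub_one_sub hn hζ).mono_left
    (nhdsWithin_mono _ hroots), ?_⟩
  have hn3 : ((n : ℂ) - 3) / 2 = ((((n : ℝ) - 3) / 2 : ℝ) : ℂ) := by push_cast; rfl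
  rw [norm_mul, norm_pow, Complex.norm_eq_one_of_pow_eq_one hζ (by omega), one_pow, one_mul,
    hn3, Complex.norm_real, Real.norm_eq_abs, one_mul, abs_le]
  have : (2 : ℝ) ≤ n := by exact_mod_cast hn
  constructor <;> linarith
end
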